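/- arXiv:2305.16901 — 7 statements merged into one kernel-verified Lean document; each statement's English description precedes it below -/
import Mathlib

section
/- Let Y be a real N×n matrix with YᵀY = Iₙ and let G be any real N×n matrix. Then for every Δ in the tangent space T_Y St (i.e. YᵀΔ + ΔᵀY = 0), one has Tr(GᵀΔ) = Tr((G − Y Gᵀ Y)ᵀ (I_N − ½ Y Yᵀ) Δ). In other words, rgrad(Y,G) = G − Y Gᵀ Y is the Riemannian gradient of a function with Euclidean gradient G with respect to the canonical metric g_Y(V₁,V₂) = Tr(V₁ᵀ(I_N − ½YYᵀ)V₂) on the Stiefel manifold. -/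
open Matrix

/-- `rgrad(Y,G) = G - Y Gᵀ Y` is the Riemannian gradient with respect to the canonical
metric `g_Y(V₁,V₂) = Tr(V₁ᵀ(I - ½YYᵀ)V₂)` on the Stiefel manifold: for every tangent
vector `Δ`, `Tr(GᵀΔ) = g_Y(rgrad(Y,G), Δ)`. -/
theorem rgrad_is_riemannian_gradient (N n : ℕ) (Y G : Matrix (Fin N) (Fin n) ℝ)
    (hY : Yᵀ * Y = 1) :
    ∀ Δ : Matrix (Fin N) (Fin n) ℝ, Yᵀ * Δ + Δᵀ * Y = 0 →
      Matrix.trace (Gᵀ * Δ) =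
        Matrix.trace ((G - Y * Gᵀ * Y)ᵀ *
          ((1 : Matrix (Fin N) (Fin N) ℝ) - (2: ℝ)⁻¹ • (Y * Yᵀ)) * Δ) := by
  intro Δ h
  have hs : Δᵀ * Y = -(Yᵀ * Δ) := by
    rw [eq_neg_iff_add_eq_zero, add_comm]; exact h
  have hY' : ∀ X : Matrix (Fin n) (Fin n) ℝ, Yᵀ * (Y * X) = X := by
    intro X; rw [← Matrix.mul_assoc, hY, Matrix.one_mul]
  have key : (Yᵀ * (G * (Yᵀ * Δ))).trace = -(Gᵀ * (Y * (Yᵀ * Δ))).trace := by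
    calc (Yᵀ * (G * (Yᵀ * Δ))).trace
        = ((Yᵀ * (G * (Yᵀ * Δ)))ᵀ).trace := (trace_transpose _).symm
      _ = ((Δᵀ * Y) * (Gᵀ * Y)).trace := by
          simp [transpose_mul, Matrix.mul_assoc]
      _ = (-(Yᵀ * Δ) * (Gᵀ * Y)).trace := by rw [hs]
      _ = -((Gᵀ * Y) * (Yᵀ * Δ)).trace := by
          rw [Matrix.neg_mul, trace_neg, trace_mul_comm]
      _ = -(Gᵀ * (Y * (Yᵀ * Δ))).trace := by rw [Matrix.mul_assoc]
  simp only [transpose_sub, transpose_mul, transpose_transpose, Matrix.mul_sub,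
    Matrix.sub_mul, Matrix.mul_smul, Matrix.smul_mul, Matrix.mul_one, Matrix.one_mul,
    Matrix.mul_assoc, hY', trace_sub, trace_smul, smul_eq_mul, key]
  ring
end

section
/- Let Y be a real N×n matrix with YᵀY = Iₙ and let Δ be in the tangent space T_Y St (i.e. YᵀΔ + ΔᵀY = 0). Then Ω(Y,Δ) lies in the horizontal space 𝔤^{hor,Y}: for every skew-symmetric N×N matrix V with VY = 0, one has Tr(Ω(Y,Δ)ᵀ V) = 0. -/
open Matrix

/-- For `Δ` in the tangent space of the Stiefel manifold at `Y`, the lift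
`Ω(Y,Δ) = (I − ½YYᵀ)ΔYᵀ − YΔᵀ(I − ½YYᵀ)` lies in the horizontal space `𝔤^{hor,Y}`:
it is orthogonal (w.r.t. the trace inner product) to every skew-symmetric `V` with `VY = 0`. -/
theorem omega_mem_horizontal (N n : ℕ) (Y Δ : Matrix (Fin N) (Fin n) ℝ)
    (hY : Yᵀ * Y = 1) (hΔ : Yᵀ * Δ + Δᵀ * Y = 0) :
    ∀ V : Matrix (Fin N) (Fin N) ℝ, Vᵀ = -V → V * Y = 0 →
      Matrix.trace
        (((1 - (2 : ℝ)⁻¹ • (Y * Yᵀ)) * Δ * Yᵀ - Y * Δᵀ * (1 - (2 : ℝ)⁻¹ • (Y * Yᵀ)))ᵀ * V)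
        = 0 := by
  intro V hVs hVY
  set A : Matrix (Fin N) (Fin N) ℝ := 1 - (2 : ℝ)⁻¹ • (Y * Yᵀ) with hA
  have hYV : Yᵀ * V = 0 := by
    have h := congrArg Matrix.transpose hVY
    rw [Matrix.transpose_mul, hVs, Matrix.mul_neg, Matrix.transpose_zero,
      neg_eq_zero] at h
    exact h
  have hAT : Aᵀ = A := by
    simp [hA, Matrix.transpose_sub, Matrix.transpose_smul, Matrix.transpose_mul]
  have hAV : A * V = V := by
    rw [hA, Matrix.sub_mul, Matrix.one_mul, Matrix.smul_mul, Matrix.mul_assoc,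
      hYV, Matrix.mul_zero, smul_zero, sub_zero]
  have h1 : ((A * Δ * Yᵀ)ᵀ * V) = Y * (Δᵀ * V) := by
    rw [Matrix.transpose_mul, Matrix.transpose_mul, Matrix.transpose_transpose,
      Matrix.mul_assoc, Matrix.mul_assoc, hAT, hAV]
  have h2 : ((Y * Δᵀ * A)ᵀ * V) = Aᵀ * (Δ * (Yᵀ * V)) := by
    rw [Matrix.transpose_mul, Matrix.transpose_mul, Matrix.transpose_transpose,
      Matrix.mul_assoc, Matrix.mul_assoc]
  rw [Matrix.transpose_sub, Matrix.sub_mul, Matrix.trace_sub, h1, h2, hYV,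
    Matrix.mul_zero, Matrix.mul_zero, Matrix.trace_zero, sub_zero,
    Matrix.trace_mul_comm, Matrix.mul_assoc, hVY, Matrix.mul_zero,
    Matrix.trace_zero]
end

section
/- Let Y be a real N×n matrix with YᵀY = Iₙ. Then the linear map Δ ↦ Ω(Y,Δ) = (I_N − ½YYᵀ)ΔYᵀ − YΔᵀ(I_N − ½YYᵀ) is a linear bijection from the tangent space T_Y St = {Δ ∈ ℝ^{N×n} : YᵀΔ + ΔᵀY = 0} onto the horizontal space 𝔤^{hor,Y} = {B ∈ ℝ^{N×N} skew-symmetric : Tr(BᵀV) = 0 for all skew-symmetric V with VY = 0}. -/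
open Matrix

private lemma eq_zero_of_trace_transpose_mul_self {N : ℕ}
    (A : Matrix (Fin N) (Fin N) ℝ) (h : Matrix.trace (Aᵀ * A) = 0) : A = 0 := by
  ext i j
  have h' : ∑ p : Fin N, ∑ q : Fin N, A q p * A q p = 0 := by
    simpa [Matrix.trace, Matrix.diag, Matrix.mul_apply, Matrix.transpose_apply] using h
  have h1 := (Finset.sum_eq_zero_iff_of_nonneg
    (fun p _ => Finset.sum_nonneg fun q _ => mul_self_nonneg (A q p))).mp h' j
    (Finset.mem_univ _)
  have h2 := (Finset.sum_eq_zero_iff_of_nonneg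
    (fun q _ => mul_self_nonneg (A q j))).mp h1 i (Finset.mem_univ _)
  simpa using mul_self_eq_zero.mp h2

/-- The map `Δ ↦ Ω(Y,Δ) = (I − ½YYᵀ)ΔYᵀ − YΔᵀ(I − ½YYᵀ)` is a linear bijection from the
tangent space `T_Y St` onto the horizontal space `𝔤^{hor,Y}`. -/
theorem omega_linear_bijection (N n : ℕ) (Y : Matrix (Fin N) (Fin n) ℝ)
    (hY : Yᵀ * Y = 1) :
    (∀ (a b : ℝ) (Δ₁ Δ₂ : Matrix (Fin N) (Fin n) ℝ),
      (1 - (2 : ℝ)⁻¹ • (Y * Yᵀ)) * (a • Δ₁ + b • Δ₂) * Yᵀ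
          - Y * (a • Δ₁ + b • Δ₂)ᵀ * (1 - (2 : ℝ)⁻¹ • (Y * Yᵀ))
        = a • ((1 - (2 : ℝ)⁻¹ • (Y * Yᵀ)) * Δ₁ * Yᵀ - Y * Δ₁ᵀ * (1 - (2 : ℝ)⁻¹ • (Y * Yᵀ)))
          + b • ((1 - (2 : ℝ)⁻¹ • (Y * Yᵀ)) * Δ₂ * Yᵀ
            - Y * Δ₂ᵀ * (1 - (2 : ℝ)⁻¹ • (Y * Yᵀ)))) ∧
    Set.BijOn
      (fun Δ : Matrix (Fin N) (Fin n) ℝ =>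
        (1 - (2 : ℝ)⁻¹ • (Y * Yᵀ)) * Δ * Yᵀ - Y * Δᵀ * (1 - (2 : ℝ)⁻¹ • (Y * Yᵀ)))
      {Δ : Matrix (Fin N) (Fin n) ℝ | Yᵀ * Δ + Δᵀ * Y = 0}
      {B : Matrix (Fin N) (Fin N) ℝ | Bᵀ = -B ∧
        ∀ V : Matrix (Fin N) (Fin N) ℝ, Vᵀ = -V → V * Y = 0 →
          Matrix.trace (Bᵀ * V) = 0} := by
  set P : Matrix (Fin N) (Fin N) ℝ := Y * Yᵀ with hPdef
  set Q : Matrix (Fin N) (Fin N) ℝ := 1 - (2 : ℝ)⁻¹ • P with hQdef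
  have hPt : Pᵀ = P := by rw [hPdef, transpose_mul, transpose_transpose]
  have hQt : Qᵀ = Q := by rw [hQdef, transpose_sub, transpose_one, transpose_smul, hPt]
  have hPY : P * Y = Y := by rw [hPdef, Matrix.mul_assoc, hY, Matrix.mul_one]
  have hYP : Yᵀ * P = Yᵀ := by rw [hPdef, ← Matrix.mul_assoc, hY, Matrix.one_mul]
  have hPP : P * P = P := by rw [hPdef]; rw [Matrix.mul_assoc, ← Matrix.mul_assoc Yᵀ, hY,
    Matrix.one_mul]
  have hQY : Q * Y = (2 : ℝ)⁻¹ • Y := by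
    rw [hQdef, Matrix.sub_mul, Matrix.one_mul, Matrix.smul_mul, hPY,
      sub_eq_iff_eq_add, ← add_smul]
    norm_num
  have hYQ : Yᵀ * Q = (2 : ℝ)⁻¹ • Yᵀ := by
    rw [hQdef, Matrix.mul_sub, Matrix.mul_one, Matrix.mul_smul, hYP,
      sub_eq_iff_eq_add, ← add_smul]
    norm_num
  -- key: (Ω Δ) * Y = Δ - ½ • (Y * (YᵀΔ + ΔᵀY))
  have key : ∀ Δ : Matrix (Fin N) (Fin n) ℝ,
      (Q * Δ * Yᵀ - Y * Δᵀ * Q) * Y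
        = Δ - (2 : ℝ)⁻¹ • (Y * (Yᵀ * Δ + Δᵀ * Y)) := by
    intro Δ
    have h1 : Q * Δ * Yᵀ * Y = Δ - (2 : ℝ)⁻¹ • (Y * (Yᵀ * Δ)) := by
      rw [Matrix.mul_assoc (Q * Δ), hY, Matrix.mul_one, hQdef, Matrix.sub_mul,
        Matrix.one_mul, Matrix.smul_mul, hPdef, Matrix.mul_assoc]
    have h2 : Y * Δᵀ * Q * Y = (2 : ℝ)⁻¹ • (Y * (Δᵀ * Y)) := by
      rw [Matrix.mul_assoc (Y * Δᵀ), hQY, Matrix.mul_smul, Matrix.mul_assoc]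
    rw [Matrix.sub_mul, h1, h2, Matrix.mul_add, smul_add]
    abel
  have keyT : ∀ Δ ∈ {Δ : Matrix (Fin N) (Fin n) ℝ | Yᵀ * Δ + Δᵀ * Y = 0},
      (Q * Δ * Yᵀ - Y * Δᵀ * Q) * Y = Δ := by
    intro Δ hΔ
    rw [key Δ, hΔ, Matrix.mul_zero, smul_zero, sub_zero]
  refine ⟨?_, ?_, ?_, ?_⟩
  · -- linearity
    intro a b Δ₁ Δ₂
    simp only [transpose_add, transpose_smul, Matrix.mul_add, Matrix.add_mul,
      Matrix.mul_smul, Matrix.smul_mul, smul_sub]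
    abel
  · -- MapsTo
    intro Δ _
    constructor
    · -- skew
      simp only [transpose_sub, transpose_mul, transpose_transpose, hQt]
      rw [Matrix.mul_assoc, Matrix.mul_assoc, neg_sub]
    · -- horizontal
      intro V hVskew hVY
      have hYV : Yᵀ * V = 0 := by
        have := congrArg transpose hVY
        rw [transpose_mul, hVskew, Matrix.mul_neg, transpose_zero] at this
        rw [← neg_eq_zero, ← Matrix.mul_neg, ← hVskew]
        simpa [hVskew] using this
      have hQV : Q * V = V := by
        rw [hQdef, Matrix.sub_mul, Matrix.one_mul, Matrix.smul_mul, hPdef,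
          Matrix.mul_assoc, hYV, Matrix.mul_zero, smul_zero, sub_zero]
      have ht : ((Q * Δ * Yᵀ - Y * Δᵀ * Q) : Matrix (Fin N) (Fin N) ℝ)ᵀ * V
          = Y * (Δᵀ * V) := by
        simp only [transpose_sub, transpose_mul, transpose_transpose, hQt,
          Matrix.sub_mul, Matrix.mul_assoc, hQV, hYV, Matrix.mul_zero, sub_zero]
      rw [ht, Matrix.trace_mul_comm, Matrix.mul_assoc, hVY, Matrix.mul_zero,
        Matrix.trace_zero]
  · -- InjOn
    intro Δ₁ h₁ Δ₂ h₂ h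
    have := congrArg (· * Y) h
    simp only at this
    rwa [keyT Δ₁ h₁, keyT Δ₂ h₂] at this
  · -- SurjOn
    intro B hB
    obtain ⟨hBt, hBhor⟩ := hB
    refine ⟨B * Y, ?_, ?_⟩
    · -- tangent
      show Yᵀ * (B * Y) + (B * Y)ᵀ * Y = 0
      rw [transpose_mul, hBt]
      simp [Matrix.mul_assoc]
    · -- Ω(B*Y) = B
      show Q * (B * Y) * Yᵀ - Y * (B * Y)ᵀ * Q = B
      set E : Matrix (Fin N) (Fin N) ℝ := 1 - P with hEdef
      have hEt : Eᵀ = E := by rw [hEdef, transpose_sub, transpose_one, hPt]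
      have hEE : E * E = E := by
        rw [hEdef, Matrix.mul_sub, Matrix.mul_one, Matrix.sub_mul, Matrix.one_mul, hPP]
        abel
      have hEY : E * Y = 0 := by
        rw [hEdef, Matrix.sub_mul, Matrix.one_mul, hPY, sub_self]
      have hΩ : Q * (B * Y) * Yᵀ - Y * (B * Y)ᵀ * Q
          = B * P + P * B - P * B * P := by
        have e1 : Q * (B * Y) * Yᵀ = B * P - (2 : ℝ)⁻¹ • (P * B * P) := by
          rw [hQdef, Matrix.sub_mul, Matrix.one_mul, Matrix.smul_mul, Matrix.sub_mul,
            Matrix.smul_mul, hPdef]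
          congr 1
          · rw [Matrix.mul_assoc]
          · rw [Matrix.mul_assoc (Y * Yᵀ), Matrix.mul_assoc (Y * Yᵀ),
              Matrix.mul_assoc B Y Yᵀ]
        have e2 : Y * (B * Y)ᵀ * Q = -(P * B * Q) := by
          rw [transpose_mul, hBt]
          simp only [Matrix.mul_neg, Matrix.neg_mul, neg_inj]
          rw [hPdef, Matrix.mul_assoc Y Yᵀ B]
        have e3 : P * B * Q = P * B - (2 : ℝ)⁻¹ • (P * B * P) := by
          rw [hQdef, Matrix.mul_sub, Matrix.mul_one, Matrix.mul_smul]
        rw [e1, e2, e3]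
        module
      have hV : E * B * E = 0 := by
        set V : Matrix (Fin N) (Fin N) ℝ := E * B * E with hVdef
        have hVtE : Vᵀ = E * Bᵀ * E := by
          rw [hVdef, transpose_mul, transpose_mul, hEt, ← Matrix.mul_assoc]
        have hVt : Vᵀ = -V := by
          rw [hVtE, hVdef, hBt]
          noncomm_ring
        have hVY : V * Y = 0 := by
          rw [hVdef, Matrix.mul_assoc, hEY, Matrix.mul_zero]
        have htr := hBhor V hVt hVY
        have hVE : V * E = V := by
          rw [hVdef, Matrix.mul_assoc (E * B) E E, hEE]
        have hstep : Vᵀ * V = E * (Bᵀ * V) := by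
          rw [hVtE, hVdef]
          have h9 : E * Bᵀ * E * (E * B * E) = E * Bᵀ * (E * E) * (B * E) := by
            noncomm_ring
          rw [h9, hEE]
          noncomm_ring
        have htrV : Matrix.trace (Vᵀ * V) = 0 := by
          rw [hstep, Matrix.trace_mul_comm, Matrix.mul_assoc, hVE, htr]
        exact eq_zero_of_trace_transpose_mul_self V htrV
      have expand : E * B * E = B - (B * P + P * B - P * B * P) := by
        rw [hEdef]; noncomm_ring
      rw [expand] at hV
      rw [hΩ]
      exact (sub_eq_zero.mp hV).symm
end

section
/- Let B′, B″ ∈ ℝ^{N×k} be real matrices. Then the matrix exponential of B′B″ᵀ satisfies exp(B′B″ᵀ) = I_N + B′ · 𝔄(B″ᵀB′) · B″ᵀ, where 𝔄(X) = Σ_{m=0}^∞ (1/(m+1)!) Xᵐ is a convergent series of k×k matrices. -/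
/-!
Write `exp (A * B) = ∑ₙ (n!)⁻¹ (A * B)ⁿ`. Every term with `n = m + 1 ≥ 1` factors as
`A * ((m + 1)!)⁻¹ (B * A)ᵐ * B`, and the two-sided multiplication `Y ↦ A * Y * B` commutes
with the sum, which converges because its terms are dominated by those of `exp (B * A)`.
-/

open Matrix Nat

theorem summable_inv_factorial_succ_smul_pow {𝕂 𝔸 : Type*} [RCLike 𝕂] [NormedRing 𝔸]
    [NormedAlgebra 𝕂 𝔸] [CompleteSpace 𝔸] (x : 𝔸) :
    Summable fun m : ℕ => ((m + 1)! : 𝕂)⁻¹ • x ^ m := by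
  refine Summable.of_norm_bounded (NormedSpace.norm_expSeries_summable' (𝕂 := 𝕂) x) fun m => ?_
  simp only [norm_smul, norm_inv, RCLike.norm_natCast]
  gcongr
  exact m.le_succ

theorem Matrix.summable_inv_factorial_succ_smul_pow {n 𝕂 : Type*} [Fintype n] [DecidableEq n]
    [RCLike 𝕂] (X : Matrix n n 𝕂) :
    Summable fun m : ℕ => ((m + 1)! : 𝕂)⁻¹ • X ^ m :=
  open scoped Norms.Operator in _root_.summable_inv_factorial_succ_smul_pow X

section MatrixMul

variable {ι l m n R : Type*} [Fintype m] [Semiring R] [TopologicalSpace R]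
  [IsTopologicalSemiring R]

theorem HasSum.matrix_mul_left (A : Matrix l m R) {f : ι → Matrix m n R} {a : Matrix m n R}
    (hf : HasSum f a) : HasSum (fun i => A * f i) (A * a) :=
  hf.map (addMonoidHomMulLeft A) (continuous_const.matrix_mul continuous_id)

theorem HasSum.matrix_mul_right (B : Matrix m n R) {f : ι → Matrix l m R} {a : Matrix l m R}
    (hf : HasSum f a) : HasSum (fun i => f i * B) (a * B) :=
  hf.map (addMonoidHomMulRight B) (continuous_id.matrix_mul continuous_const)

end MatrixMul

theorem Matrix.mul_pow_succ_eq_mul_pow_mul {m n R : Type*} [Fintype m] [Fintype n] [DecidableEq m]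
    [DecidableEq n] [Semiring R] (A : Matrix m n R) (B : Matrix n m R) (k : ℕ) :
    (A * B) ^ (k + 1) = A * (B * A) ^ k * B := by
  induction k with
  | zero => simp
  | succ k ih =>
    rw [pow_succ, ih, pow_succ]
    simp only [Matrix.mul_assoc]

theorem Matrix.exp_mul_eq_one_add_mul_tsum_mul {m n 𝕂 : Type*} [Fintype m] [Fintype n]
    [DecidableEq m] [DecidableEq n] [RCLike 𝕂] (A : Matrix m n 𝕂) (B : Matrix n m 𝕂) :
    NormedSpace.exp (A * B) = 1 + A * (∑' k : ℕ, ((k + 1)! : 𝕂)⁻¹ • (B * A) ^ k) * B := by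
  set S := ∑' k : ℕ, ((k + 1)! : 𝕂)⁻¹ • (B * A) ^ k
  have hS : HasSum (fun k : ℕ => ((k + 1)! : 𝕂)⁻¹ • (B * A) ^ k) S :=
    (Matrix.summable_inv_factorial_succ_smul_pow (B * A)).hasSum
  have htail : HasSum (fun k : ℕ => ((k + 1)! : 𝕂)⁻¹ • (A * B) ^ (k + 1)) (A * S * B) :=
    ((hS.matrix_mul_left A).matrix_mul_right B).congr_fun fun k => by
      rw [Matrix.mul_pow_succ_eq_mul_pow_mul, Matrix.mul_smul, Matrix.smul_mul]
  calc NormedSpace.exp (A * B) = ∑' n : ℕ, (n ! : 𝕂)⁻¹ • (A * B) ^ n :=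
        congrFun (NormedSpace.exp_eq_tsum 𝕂) _
    _ = (0 ! : 𝕂)⁻¹ • (A * B) ^ 0 + A * S * B :=
        (htail.zero_add (f := fun n : ℕ => (n ! : 𝕂)⁻¹ • (A * B) ^ n)).tsum_eq
    _ = 1 + A * S * B := by rw [factorial_zero, cast_one, inv_one, pow_zero, one_smul]

/-- For `B′, B″ ∈ ℝ^{N×k}`, the matrix exponential satisfies
`exp(B′B″ᵀ) = I + B′ · 𝔄(B″ᵀB′) · B″ᵀ`, where `𝔄(X) = Σ_{m≥0} (1/(m+1)!) Xᵐ` is a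
convergent (summable) series of `k×k` matrices. -/
theorem exp_low_rank_factorization (N k : ℕ)
    (B' B'' : Matrix (Fin N) (Fin k) ℝ) :
    Summable (fun m : ℕ => ((m + 1).factorial : ℝ)⁻¹ • (B''ᵀ * B') ^ m) ∧
    NormedSpace.exp (B' * B''ᵀ) =
      1 + B' * (∑' m : ℕ, ((m + 1).factorial : ℝ)⁻¹ • (B''ᵀ * B') ^ m) * B''ᵀ :=
  ⟨Matrix.summable_inv_factorial_succ_smul_pow _, exp_mul_eq_one_add_mul_tsum_mul B' B''ᵀ⟩
end

section
/- Let Y be a real N×n matrix with YᵀY = Iₙ, let Δ be in the tangent space T_Y St (i.e. YᵀΔ + ΔᵀY = 0), and let t ∈ ℝ. Then the geodesic curve γ(t) = exp(t·Ω(Y,Δ))·Y remains on the Stiefel manifold: γ(t)ᵀγ(t) = Iₙ. -/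
/-! `Ω(Y,Δ)` has the form `P Yᵀ − Y Pᵀ` with `P = (I − ½YYᵀ)Δ`, so it is skew-symmetric. The
exponential of a skew-symmetric matrix is orthogonal, and an orthogonal factor on the
left does not change the Gram matrix `γᵀγ = YᵀY = I`. -/

open Matrix

namespace Matrix

variable {m k R : Type*}

theorem transpose_mul_transpose_sub_eq_neg [Fintype k] [CommRing R] (P Q : Matrix m k R) :
    (P * Qᵀ - Q * Pᵀ)ᵀ = -(P * Qᵀ - Q * Pᵀ) := by
  rw [transpose_sub, transpose_mul, transpose_mul, transpose_transpose, transpose_transpose,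
    neg_sub]

theorem exp_mem_orthogonalGroup_of_transpose_eq_neg [Fintype m] [DecidableEq m]
    {A : Matrix m m ℝ} (hA : Aᵀ = -A) :
    NormedSpace.exp A ∈ orthogonalGroup m ℝ := by
  rw [mem_orthogonalGroup_iff', ← exp_transpose, hA,
    ← Matrix.exp_add_of_commute _ _ (Commute.refl A).neg_left, neg_add_cancel,
    NormedSpace.exp_zero]

theorem transpose_mul_self_of_mem_orthogonalGroup_mul [Fintype m] [DecidableEq m] [CommRing R]
    {Q : Matrix m m R} (hQ : Q ∈ orthogonalGroup m R) (Y : Matrix m k R) :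
    (Q * Y)ᵀ * (Q * Y) = Yᵀ * Y := by
  rw [mem_orthogonalGroup_iff'] at hQ
  rw [transpose_mul, Matrix.mul_assoc, ← Matrix.mul_assoc Qᵀ, hQ, Matrix.one_mul]

end Matrix

theorem geodesic_stays_on_stiefel_general (N n : ℕ) (Y Δ : Matrix (Fin N) (Fin n) ℝ)
    (hY : Yᵀ * Y = 1) (t : ℝ) :
    (NormedSpace.exp
        (t • ((1 - (2 : ℝ)⁻¹ • (Y * Yᵀ)) * Δ * Yᵀ
          - Y * Δᵀ * (1 - (2 : ℝ)⁻¹ • (Y * Yᵀ)))) * Y)ᵀ *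
      (NormedSpace.exp
        (t • ((1 - (2 : ℝ)⁻¹ • (Y * Yᵀ)) * Δ * Yᵀ
          - Y * Δᵀ * (1 - (2 : ℝ)⁻¹ • (Y * Yᵀ)))) * Y) = 1 := by
  set B : Matrix (Fin N) (Fin N) ℝ := 1 - (2 : ℝ)⁻¹ • (Y * Yᵀ)
  have hB : Bᵀ = B := by
    simp only [B, transpose_sub, transpose_one, transpose_smul, transpose_mul, transpose_transpose]
  have hΩ : B * Δ * Yᵀ - Y * Δᵀ * B = (B * Δ) * Yᵀ - Y * (B * Δ)ᵀ := by
    rw [transpose_mul, hB, Matrix.mul_assoc Y]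
  have hskew : (t • (B * Δ * Yᵀ - Y * Δᵀ * B))ᵀ = -(t • (B * Δ * Yᵀ - Y * Δᵀ * B)) := by
    rw [transpose_smul, hΩ, transpose_mul_transpose_sub_eq_neg, smul_neg]
  rw [transpose_mul_self_of_mem_orthogonalGroup_mul
    (exp_mem_orthogonalGroup_of_transpose_eq_neg hskew), hY]

/-- The geodesic `γ(t) = exp(t·Ω(Y,Δ))·Y` stays on the Stiefel manifold:
`γ(t)ᵀγ(t) = Iₙ`, where `Ω(Y,Δ) = (I − ½YYᵀ)ΔYᵀ − YΔᵀ(I − ½YYᵀ)`. -/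
theorem geodesic_stays_on_stiefel (N n : ℕ) (Y Δ : Matrix (Fin N) (Fin n) ℝ)
    (hY : Yᵀ * Y = 1) (hΔ : Yᵀ * Δ + Δᵀ * Y = 0) (t : ℝ) :
    (NormedSpace.exp
        (t • ((1 - (2 : ℝ)⁻¹ • (Y * Yᵀ)) * Δ * Yᵀ
          - Y * Δᵀ * (1 - (2 : ℝ)⁻¹ • (Y * Yᵀ)))) * Y)ᵀ *
      (NormedSpace.exp
        (t • ((1 - (2 : ℝ)⁻¹ • (Y * Yᵀ)) * Δ * Yᵀ
          - Y * Δᵀ * (1 - (2 : ℝ)⁻¹ • (Y * Yᵀ)))) * Y) = 1 :=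
  geodesic_stays_on_stiefel_general N n Y Δ hY t
end

section
/- Let Y be a real N×n matrix with YᵀY = Iₙ and let Δ be in the tangent space T_Y St (i.e. YᵀΔ + ΔᵀY = 0). Then the curve γ(t) = exp(t·Ω(Y,Δ))·Y satisfies the retraction properties γ(0) = Y and γ′(0) = Δ (the derivative of t ↦ exp(t·Ω(Y,Δ))·Y at t = 0 equals Δ). -/
/-!
`γ(0) = exp 0 · Y = Y`, and differentiating `exp (tΩ) Y` entrywise gives `γ′(0) = ΩY`. Expanding
with `YᵀY = I`, `ΩY = Δ - ½ Y (YᵀΔ + ΔᵀY)`, which is `Δ` by tangency.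
-/

open Matrix

section StiefelOmega

variable {m n 𝕜 : Type*} [Fintype m] [DecidableEq m] [Fintype n] [Field 𝕜]

def stiefelOmega (Y Δ : Matrix m n 𝕜) : Matrix m m 𝕜 :=
  (1 - (2 : 𝕜)⁻¹ • (Y * Yᵀ)) * Δ * Yᵀ - Y * Δᵀ * (1 - (2 : 𝕜)⁻¹ • (Y * Yᵀ))

theorem stiefelOmega_mul_self [NeZero (2 : 𝕜)] [DecidableEq n] {Y Δ : Matrix m n 𝕜}
    (hY : Yᵀ * Y = 1) (hΔ : Yᵀ * Δ + Δᵀ * Y = 0) : stiefelOmega Y Δ * Y = Δ := by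
  have hhalf : (1 : 𝕜) - 2⁻¹ = 2⁻¹ := by simpa [one_div] using sub_half (1 : 𝕜)
  calc stiefelOmega Y Δ * Y = Δ - (2 : 𝕜)⁻¹ • (Y * (Yᵀ * Δ + Δᵀ * Y)) := by
        simp only [stiefelOmega, Matrix.sub_mul, Matrix.mul_sub, Matrix.one_mul,
          Matrix.smul_mul, Matrix.mul_smul, Matrix.mul_assoc, hY, Matrix.mul_one, Matrix.mul_add]
        linear_combination (norm := module) -(hhalf • (Y * (Δᵀ * Y) : Matrix m n 𝕜))
    _ = Δ := by rw [hΔ, Matrix.mul_zero, smul_zero, sub_zero]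

end StiefelOmega

section ExpDeriv

-- `NormedSpace.exp` needs only a topology; differentiating it needs some normed-algebra structure.
attribute [local instance] Matrix.linftyOpNormedRing Matrix.linftyOpNormedAlgebra

variable {m n : Type*} [Fintype m] [DecidableEq m]

theorem hasDerivAt_exp_smul_mul_apply {𝕂 : Type*} [RCLike 𝕂] (A : Matrix m m 𝕂)
    (B : Matrix m n 𝕂) (i : m) (j : n) (t : 𝕂) :
    HasDerivAt (fun u : 𝕂 => (NormedSpace.exp (u • A) * B) i j)
      ((NormedSpace.exp (t • A) * A * B) i j) t :=
  (entryLinearMap 𝕂 𝕂 i j ∘ₗ mulRightLinearMap m 𝕂 B).toContinuousLinearMap.hasFDerivAt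
    |>.comp_hasDerivAt t (hasDerivAt_exp_smul_const A t)

end ExpDeriv

/-- The curve `γ(t) = exp(t·Ω(Y,Δ))·Y` satisfies the retraction properties `γ(0) = Y` and
`γ′(0) = Δ` (derivative taken entrywise in `t`), where
`Ω(Y,Δ) = (I − ½YYᵀ)ΔYᵀ − YΔᵀ(I − ½YYᵀ)`. -/
theorem geodesic_retraction_properties (N n : ℕ) (Y Δ : Matrix (Fin N) (Fin n) ℝ)
    (hY : Yᵀ * Y = 1) (hΔ : Yᵀ * Δ + Δᵀ * Y = 0) :
    (NormedSpace.exp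
        ((0 : ℝ) • ((1 - (2 : ℝ)⁻¹ • (Y * Yᵀ)) * Δ * Yᵀ
          - Y * Δᵀ * (1 - (2 : ℝ)⁻¹ • (Y * Yᵀ)))) * Y = Y) ∧
    ∀ (i : Fin N) (j : Fin n), HasDerivAt
      (fun t : ℝ =>
        ((NormedSpace.exp
          (t • ((1 - (2 : ℝ)⁻¹ • (Y * Yᵀ)) * Δ * Yᵀ
            - Y * Δᵀ * (1 - (2 : ℝ)⁻¹ • (Y * Yᵀ)))) * Y : Matrix (Fin N) (Fin n) ℝ) i j))
      (Δ i j) 0 := by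
  refine ⟨by rw [zero_smul, NormedSpace.exp_zero, Matrix.one_mul], fun i j => ?_⟩
  have h := hasDerivAt_exp_smul_mul_apply (stiefelOmega Y Δ) Y i j 0
  rwa [zero_smul, NormedSpace.exp_zero, Matrix.one_mul, stiefelOmega_mul_self hY hΔ] at h
end

section
/- Let Y be a real N×n matrix with YᵀY = Iₙ and let Δ₁, Δ₂ be in the tangent space T_Y St (i.e. YᵀΔᵢ + ΔᵢᵀY = 0). Then ½·Tr(Ω(Y,Δ₁)ᵀ Ω(Y,Δ₂)) = Tr(Δ₁ᵀ (I_N − ½YYᵀ) Δ₂); that is, pulling back the canonical metric ½Tr(B₁ᵀB₂) on the Lie algebra of O(N) through Ω recovers the canonical metric on the Stiefel manifold. -/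
open Matrix

/-- Pulling back the canonical metric `½Tr(B₁ᵀB₂)` on the Lie algebra of `O(N)` through
`Ω` recovers the canonical metric on the Stiefel manifold:
`½·Tr(Ω(Y,Δ₁)ᵀ Ω(Y,Δ₂)) = Tr(Δ₁ᵀ (I − ½YYᵀ) Δ₂)` for tangent vectors `Δ₁, Δ₂`. -/
theorem omega_pullback_metric (N n : ℕ) (Y Δ₁ Δ₂ : Matrix (Fin N) (Fin n) ℝ)
    (hY : Yᵀ * Y = 1)
    (hΔ₁ : Yᵀ * Δ₁ + Δ₁ᵀ * Y = 0) (hΔ₂ : Yᵀ * Δ₂ + Δ₂ᵀ * Y = 0) :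
    (2 : ℝ)⁻¹ * Matrix.trace
        (((1 - (2 : ℝ)⁻¹ • (Y * Yᵀ)) * Δ₁ * Yᵀ - Y * Δ₁ᵀ * (1 - (2 : ℝ)⁻¹ • (Y * Yᵀ)))ᵀ *
          ((1 - (2 : ℝ)⁻¹ • (Y * Yᵀ)) * Δ₂ * Yᵀ - Y * Δ₂ᵀ * (1 - (2 : ℝ)⁻¹ • (Y * Yᵀ)))) =
      Matrix.trace (Δ₁ᵀ * (1 - (2 : ℝ)⁻¹ • (Y * Yᵀ)) * Δ₂) := by
  set c : ℝ := (2:ℝ)⁻¹ with hc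
  set P : Matrix (Fin N) (Fin N) ℝ := 1 - c • (Y * Yᵀ) with hP
  have h1 : Δ₁ᵀ * Y = -(Yᵀ * Δ₁) := eq_neg_of_add_eq_zero_right hΔ₁
  have h2 : Δ₂ᵀ * Y = -(Yᵀ * Δ₂) := eq_neg_of_add_eq_zero_right hΔ₂
  have hPT : Pᵀ = P := by
    simp [hP, transpose_sub, transpose_smul, transpose_one, transpose_mul, transpose_transpose]
  have hPY : P * Y = c • Y := by
    rw [hP, Matrix.sub_mul, Matrix.one_mul, Matrix.smul_mul, Matrix.mul_assoc, hY, Matrix.mul_one]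
    module
  have hPY' : ∀ X : Matrix (Fin n) (Fin n) ℝ, P * (Y * X) = c • (Y * X) := by
    intro X; rw [← Matrix.mul_assoc, hPY, Matrix.smul_mul]
  have hYY' : ∀ X : Matrix (Fin n) (Fin n) ℝ, Yᵀ * (Y * X) = X := by
    intro X; rw [← Matrix.mul_assoc, hY, one_mul]
  have hYP : Yᵀ * P = c • Yᵀ := by
    rw [hP, Matrix.mul_sub, Matrix.mul_one, Matrix.mul_smul, ← Matrix.mul_assoc, hY,
      Matrix.one_mul]
    module
  have hYP' : ∀ X : Matrix (Fin N) (Fin n) ℝ, Yᵀ * (P * X) = c • (Yᵀ * X) := by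
    intro X; rw [← Matrix.mul_assoc, hYP, Matrix.smul_mul]
  have hPmul : ∀ X : Matrix (Fin N) (Fin n) ℝ, P * X = X - c • (Y * (Yᵀ * X)) := by
    intro X; rw [hP, Matrix.sub_mul, Matrix.one_mul, Matrix.smul_mul, Matrix.mul_assoc]
  have h1' : ∀ X : Matrix (Fin n) (Fin n) ℝ, Δ₁ᵀ * (Y * X) = -((Yᵀ * Δ₁) * X) := by
    intro X; rw [← Matrix.mul_assoc, h1, Matrix.neg_mul]
  have h2' : ∀ X : Matrix (Fin n) (Fin n) ℝ, Δ₂ᵀ * (Y * X) = -((Yᵀ * Δ₂) * X) := by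
    intro X; rw [← Matrix.mul_assoc, h2, Matrix.neg_mul]
  set s : ℝ := Matrix.trace (Δ₁ᵀ * Δ₂) with hs
  set t : ℝ := Matrix.trace ((Yᵀ * Δ₁) * (Yᵀ * Δ₂)) with ht
  have hΩ : (P * Δ₁ * Yᵀ - Y * Δ₁ᵀ * P)ᵀ * (P * Δ₂ * Yᵀ - Y * Δ₂ᵀ * P)
      = Y * (Δ₁ᵀ * (P * (P * (Δ₂ * Yᵀ)))) - Y * (Δ₁ᵀ * (P * (Y * (Δ₂ᵀ * P))))
        - (P * Δ₁) * ((Yᵀ * P) * (Δ₂ * Yᵀ)) + (P * Δ₁) * ((Yᵀ * Y) * (Δ₂ᵀ * P)) := by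
    simp only [transpose_sub, transpose_mul, transpose_transpose, hPT, Matrix.sub_mul,
      Matrix.mul_sub, Matrix.mul_assoc]
    abel
  rw [hΩ, trace_add, trace_sub, trace_sub]
  have e1 : trace (Y * (Δ₁ᵀ * (P * (P * (Δ₂ * Yᵀ))))) = s + (3/4) * t := by
    rw [trace_mul_comm]
    simp only [Matrix.mul_assoc]
    rw [hY, Matrix.mul_one, hPmul Δ₂, Matrix.mul_sub, Matrix.mul_smul, hPY', hPmul Δ₂]
    simp only [Matrix.mul_sub, Matrix.mul_smul, trace_sub, trace_smul, h1', trace_neg,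
      smul_eq_mul, ← hs, ← ht, hc]
    ring
  have e2 : trace (Y * (Δ₁ᵀ * (P * (Y * (Δ₂ᵀ * P))))) = (1/4) * t := by
    rw [trace_mul_comm]
    simp only [Matrix.mul_assoc]
    rw [hPY]
    simp only [Matrix.mul_smul, h2, Matrix.mul_neg, Matrix.neg_mul, hPY', h1',
      trace_smul, trace_neg, smul_eq_mul, neg_neg, ← ht, hc]
    ring
  have e3 : trace ((P * Δ₁) * ((Yᵀ * P) * (Δ₂ * Yᵀ))) = (1/4) * t := by
    rw [trace_mul_comm]
    simp only [Matrix.mul_assoc]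
    simp only [hYP', Matrix.mul_smul, trace_smul, smul_eq_mul]
    rw [← Matrix.mul_assoc, trace_mul_comm, ← ht, hc]
    ring
  have e4 : trace ((P * Δ₁) * ((Yᵀ * Y) * (Δ₂ᵀ * P))) = s + (3/4) * t := by
    rw [hY, Matrix.one_mul, trace_mul_comm]
    simp only [Matrix.mul_assoc]
    rw [hPmul Δ₁, Matrix.mul_sub, Matrix.mul_smul, hPY', hPmul Δ₁]
    have hA : trace (Δ₂ᵀ * Δ₁) = s := by
      rw [← Matrix.trace_transpose (Δ₂ᵀ * Δ₁), transpose_mul, transpose_transpose, hs]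
    have hB : trace ((Yᵀ * Δ₂) * (Yᵀ * Δ₁)) = t := by rw [trace_mul_comm, ht]
    simp only [Matrix.mul_sub, Matrix.mul_smul, trace_sub, trace_smul, h2', trace_neg,
      smul_eq_mul, hA, hB, hc]
    ring
  rw [e1, e2, e3, e4]
  have eR : trace (Δ₁ᵀ * P * Δ₂) = s + (1/2) * t := by
    simp only [Matrix.mul_assoc]
    rw [hPmul Δ₂]
    simp only [Matrix.mul_sub, Matrix.mul_smul, trace_sub, trace_smul, h1', trace_neg,
      smul_eq_mul, ← hs, ← ht, hc]
    ring
  rw [eR, hc]; ring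
end
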